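/- Assume the proposal distribution Θ satisfies the monotonicity assumption: there is a non-decreasing function c⁻ : (0,∞) → (0,1] such that for every continuous positive probability density f on E, inf_{x,y∈E} Θ_f(y|x)/π(y) ≥ c⁻(inf_{x∈E} f(x)/π(x)). Assume h(1) > 0. Let f be a solution of the nonlinear Metropolis evolution equation with initial condition f₀ a continuous positive probability density on E. Then for all t ≥ 0, ∫_E |f_t(x) − π(x)| dx ≤ C₀·exp(−λ·t), where λ := c⁻(inf_{x∈E} f₀(x)/π(x))·h(1) > 0 and C₀ := sqrt(∫_E |f₀(x) − π(x)|²/π(x) dx) depends only on f₀ and π. -/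

import Mathlib

/-!
Write `g_t = f_t / π`. The equation reads `π x ∂ₜ g_t(x) = ∫ K(x, y) (g_t(y) - g_t(x)) dy` with
the Metropolis kernel `K(x, y) = π(x) Θ(y|x) h(α(x, y))`, which `u h(1/u) = h(u)` makes symmetric.

Since `0 ≤ h ≤ 1`, the drift at `x` is at least `π x (min g_t - g_t(x))`; Grönwall's inequality,
applied up to the time where `min g` is smallest on `[0, t]`, shows that `min g_t ≥ min g_0`.
The monotonicity assumption then gives `Θ(y|x) ≥ c⁻(min g_0) π(y)` for all times, hence
`K(x, y) ≥ λ π(x) π(y)`, using the symmetry of `K` where `α < 1`.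

Symmetrising once more, the χ²-divergence `V(t) = ∫ π (g_t - 1)²` has derivative
`-∫∫ K (g_t(y) - g_t(x))² ≤ -λ ∫∫ π π (g_t(y) - g_t(x))² = -2λ V(t)`, so `V(t) ≤ V(0) e^{-2λt}`,
and Cauchy–Schwarz gives `∫ |f_t - π| ≤ √V(t)`.
-/

open MeasureTheory Set

/-- A continuous positive probability density on `E` (w.r.t. Lebesgue measure). -/
def IsPosDensityOn {d : ℕ} (E : Set (EuclideanSpace ℝ (Fin d)))
    (g : EuclideanSpace ℝ (Fin d) → ℝ) : Prop :=
  ContinuousOn g E ∧ (∀ x ∈ E, 0 < g x) ∧ (∫ x in E, g x) = 1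

open Function

theorem IsCompact.sInf_image_pos {X : Type*} [TopologicalSpace X] {E : Set X} {g : X → ℝ}
    (hE : IsCompact E) (hEne : E.Nonempty) (hgc : ContinuousOn g E) (hg : ∀ x ∈ E, 0 < g x) :
    0 < sInf (g '' E) := by
  obtain ⟨x, hx, hxm⟩ := ((hE.image_of_continuousOn hgc).isLeast_sInf (hEne.image _)).1
  exact hxm ▸ hg x hx

theorem IsCompact.continuousOn_sInf_image {α β γ : Type*} [ConditionallyCompleteLinearOrder α]
    [TopologicalSpace α] [OrderTopology α] [TopologicalSpace β] [TopologicalSpace γ]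
    {F : γ → β → α} {s : Set γ} {K : Set β} (hK : IsCompact K)
    (hF : ContinuousOn (uncurry F) (s ×ˢ K)) :
    ContinuousOn (fun a => sInf (F a '' K)) s := by
  rw [continuousOn_iff_continuous_domRestrict]
  have hFK : Continuous (uncurry fun (a : s) (b : K) => F a b) :=
    hF.comp_continuous (continuous_subtype_val.prodMap continuous_subtype_val)
      fun p => ⟨p.1.2, p.2.2⟩
  convert (isCompact_univ_iff.2 (isCompact_iff_compactSpace.1 hK)).continuous_sInf
    (f := fun (a : s) (b : K) => F a b) hFK
    using 2 with a
  rw [domRestrict_apply, image_univ, image_eq_range]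

theorem le_mul_exp_of_hasDerivWithinAt_le {u u' : ℝ → ℝ} {K a b : ℝ} (hab : a ≤ b)
    (hu : ∀ s ∈ Ici a, HasDerivWithinAt u (u' s) (Ici a) s)
    (hbound : ∀ s ∈ Ico a b, u' s ≤ K * u s) :
    u b ≤ u a * Real.exp (K * (b - a)) := by
  have hcont : ContinuousOn u (Icc a b) := fun s hs =>
    ((hu s hs.1).continuousWithinAt).mono Icc_subset_Ici_self
  have := le_gronwallBound_of_liminf_deriv_right_le hcont
    (fun s hs _ hr => ((hu s hs.1).mono (Ici_subset_Ici.2 hs.1)).liminf_right_slope_le hr)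
    le_rfl (fun s hs => (hbound s hs).trans_eq (add_zero _).symm) b ⟨hab, le_rfl⟩
  rwa [gronwallBound_ε0] at this

theorem le_of_isLeast_of_hasDerivWithinAt {X : Type*} {E : Set X} {G G' : ℝ → X → ℝ}
    {m : ℝ → ℝ} (hm : ContinuousOn m (Ici 0))
    (hmin : ∀ s ∈ Ici (0 : ℝ), IsLeast (G s '' E) (m s))
    (hG : ∀ x ∈ E, ∀ s ∈ Ici (0 : ℝ), HasDerivWithinAt (G · x) (G' s x) (Ici 0) s)
    (hG' : ∀ x ∈ E, ∀ s ∈ Ici (0 : ℝ), m s - G s x ≤ G' s x) {t : ℝ} (ht : 0 ≤ t) :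
    m 0 ≤ m t := by
  obtain ⟨r, ⟨hr0, hrt⟩, hr⟩ :=
    isCompact_Icc.exists_isMinOn (nonempty_Icc.2 ht) (hm.mono Icc_subset_Ici_self)
  obtain ⟨x, hx, hxr⟩ := (hmin r hr0).1
  -- `r` minimises `m` on `[0, t]`, so on `[0, r]` the gap `u s = m r - G s x` obeys `u' ≤ -u`.
  have hdecay := le_mul_exp_of_hasDerivWithinAt_le (u := fun s => m r - G s x) (K := -1) hr0
    (fun s hs => (hG x hx s hs).const_sub (m r)) fun s hs => by
      have : m r ≤ m s := hr ⟨hs.1, hs.2.le.trans hrt⟩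
      linarith [hG' x hx s hs.1]
  have hG0 : m 0 ≤ G 0 x := (hmin 0 self_mem_Ici).2 (mem_image_of_mem _ hx)
  simp only [hxr, sub_self] at hdecay
  have : 0 ≤ m r - G 0 x := nonneg_of_mul_nonneg_left hdecay (Real.exp_pos _)
  have : m r ≤ m t := hr ⟨ht, le_rfl⟩
  linarith

theorem mul_apply_div_eq_mul_apply_div {h : ℝ → ℝ} (hsym : ∀ u : ℝ, 0 < u → u * h (1 / u) = h u)
    {a b : ℝ} (ha : 0 < a) (hb : 0 < b) : a * h (b / a) = b * h (a / b) := by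
  rw [← hsym (b / a) (div_pos hb ha), one_div_div]
  field_simp

theorem mul_sub_le_mul_mul_sub {w a m u v : ℝ} (hw : 0 ≤ w) (ha : a ∈ Icc (0 : ℝ) 1)
    (hu : m ≤ u) (hv : m ≤ v) : w * (m - v) ≤ w * a * (u - v) := by
  rcases le_total v u with huv | huv
  · nlinarith [mul_nonneg (mul_nonneg hw ha.1) (sub_nonneg.2 huv)]
  · nlinarith [mul_nonneg (mul_nonneg hw (sub_nonneg.2 ha.2)) (sub_nonneg.2 huv)]

section MetropolisKernel

variable {X : Type*} (π : X → ℝ) (h : ℝ → ℝ) (Θ : X → X → ℝ)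

/-- `Θ x y` stands for the proposal density `Θ(y|x)`; the argument of `h` is the
acceptance ratio `α(x, y)`. -/
noncomputable def metropolisKernel (x y : X) : ℝ :=
  π x * Θ x y * h (Θ y x * π y / (Θ x y * π x))

variable {π h Θ}

theorem metropolisKernel_comm (hsym : ∀ u : ℝ, 0 < u → u * h (1 / u) = h u) {x y : X}
    (hxy : 0 < Θ x y * π x) (hyx : 0 < Θ y x * π y) :
    metropolisKernel π h Θ x y = metropolisKernel π h Θ y x := by
  unfold metropolisKernel
  calc _ = Θ x y * π x * h (Θ y x * π y / (Θ x y * π x)) := by ring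
    _ = Θ y x * π y * h (Θ x y * π x / (Θ y x * π y)) :=
      mul_apply_div_eq_mul_apply_div hsym hxy hyx
    _ = _ := by ring

theorem mul_le_metropolisKernel_of_one_le (hmono : MonotoneOn h (Ici 0)) (hh1 : 0 ≤ h 1)
    {c : ℝ} {x y : X} (hπx : 0 < π x) (hΘ : 0 < Θ x y) (hc : c * π y ≤ Θ x y)
    (hα : 1 ≤ Θ y x * π y / (Θ x y * π x)) :
    c * h 1 * (π x * π y) ≤ metropolisKernel π h Θ x y := by
  have hh : h 1 ≤ h (Θ y x * π y / (Θ x y * π x)) :=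
    hmono (mem_Ici.2 zero_le_one) (mem_Ici.2 (zero_le_one.trans hα)) hα
  unfold metropolisKernel
  calc c * h 1 * (π x * π y) = c * π y * (h 1 * π x) := by ring
    _ ≤ Θ x y * (h 1 * π x) := by gcongr
    _ = π x * Θ x y * h 1 := by ring
    _ ≤ _ := by gcongr

theorem mul_le_metropolisKernel (hsym : ∀ u : ℝ, 0 < u → u * h (1 / u) = h u)
    (hmono : MonotoneOn h (Ici 0)) (hh1 : 0 ≤ h 1) {c : ℝ} {x y : X}
    (hπx : 0 < π x) (hπy : 0 < π y) (hxy : 0 < Θ x y) (hyx : 0 < Θ y x)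
    (hcxy : c * π y ≤ Θ x y) (hcyx : c * π x ≤ Θ y x) :
    c * h 1 * (π x * π y) ≤ metropolisKernel π h Θ x y := by
  have ha : 0 < Θ x y * π x := mul_pos hxy hπx
  have hb : 0 < Θ y x * π y := mul_pos hyx hπy
  rcases le_total 1 (Θ y x * π y / (Θ x y * π x)) with hα | hα
  · exact mul_le_metropolisKernel_of_one_le hmono hh1 hπx hxy hcxy hα
  · rw [metropolisKernel_comm hsym ha hb, mul_comm (π x)]
    exact mul_le_metropolisKernel_of_one_le hmono hh1 hπy hyx hcyx
      ((one_le_div hb).2 ((div_le_one ha).1 hα))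

variable [TopologicalSpace X] {E : Set X}

theorem continuousOn_metropolisKernel (hπc : ContinuousOn π E) (hπ : ∀ x ∈ E, 0 < π x)
    (hhc : ContinuousOn h (Ici 0)) (hΘc : ContinuousOn (uncurry Θ) (E ×ˢ E))
    (hΘ : ∀ x ∈ E, ∀ y ∈ E, 0 < Θ x y) :
    ContinuousOn (uncurry (metropolisKernel π h Θ)) (E ×ˢ E) := by
  have hπ₁ : ContinuousOn (fun p : X × X => π p.1) (E ×ˢ E) :=
    hπc.comp continuous_fst.continuousOn fun p hp => hp.1
  have hπ₂ : ContinuousOn (fun p : X × X => π p.2) (E ×ˢ E) :=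
    hπc.comp continuous_snd.continuousOn fun p hp => hp.2
  have hΘswap : ContinuousOn (fun p : X × X => Θ p.2 p.1) (E ×ˢ E) :=
    hΘc.comp continuous_swap.continuousOn fun p hp => ⟨hp.2, hp.1⟩
  have hα : ContinuousOn (fun p : X × X => Θ p.2 p.1 * π p.2 / (Θ p.1 p.2 * π p.1))
      (E ×ˢ E) :=
    (hΘswap.mul hπ₂).div (hΘc.mul hπ₁) fun p hp => (mul_pos (hΘ _ hp.1 _ hp.2) (hπ _ hp.1)).ne'
  refine (hπ₁.mul hΘc).mul (hhc.comp hα fun p hp => ?_)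
  exact (div_pos (mul_pos (hΘ _ hp.2 _ hp.1) (hπ _ hp.2))
    (mul_pos (hΘ _ hp.1 _ hp.2) (hπ _ hp.1))).le

end MetropolisKernel

theorem sq_integral_mul_le_integral_mul_sq {X : Type*} [MeasurableSpace X] {ν : Measure X}
    {w u : X → ℝ} (hw : 0 ≤ᵐ[ν] w) (hw1 : ∫ x, w x ∂ν = 1) (hwi : Integrable w ν)
    (hwu : Integrable (fun x => w x * u x) ν) (hwu2 : Integrable (fun x => w x * u x ^ 2) ν) :
    (∫ x, w x * u x ∂ν) ^ 2 ≤ ∫ x, w x * u x ^ 2 ∂ν := by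
  set I := ∫ x, w x * u x ∂ν
  have hvar : 0 ≤ ∫ x, w x * (u x - I) ^ 2 ∂ν :=
    integral_nonneg_of_ae (hw.mono fun x hx => mul_nonneg hx (sq_nonneg _))
  have hexpand : (fun x => w x * (u x - I) ^ 2)
      = fun x => w x * u x ^ 2 - 2 * I * (w x * u x) + I ^ 2 * w x := by
    ext x; ring
  have hcross : Integrable (fun x => 2 * I * (w x * u x)) ν := hwu.const_mul _
  have hdiff : Integrable (fun x => w x * u x ^ 2 - 2 * I * (w x * u x)) ν := hwu2.sub hcross
  rw [hexpand, integral_add hdiff (hwi.const_mul _), integral_sub hwu2 hcross,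
    integral_const_mul, integral_const_mul, hw1] at hvar
  nlinarith

section CompactDomain

variable {X : Type*} [TopologicalSpace X] [T2Space X] [MeasurableSpace X]
  [OpensMeasurableSpace X] {μ : Measure X} {E : Set X}

theorem ae_restrict_prod_restrict_mem [SFinite μ] (hE : IsCompact E) :
    ∀ᵐ z ∂(μ.restrict E).prod (μ.restrict E), z ∈ E ×ˢ E := by
  rw [Measure.prod_restrict]
  exact ae_restrict_mem (hE.measurableSet.prod hE.measurableSet)

variable [IsFiniteMeasureOnCompacts μ]

theorem integral_abs_sub_le_sqrt (hE : IsCompact E) {π F : X → ℝ} (hπc : ContinuousOn π E)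
    (hπ : ∀ x ∈ E, 0 < π x) (hπ1 : ∫ x in E, π x ∂μ = 1) (hFc : ContinuousOn F E) :
    ∫ x in E, |F x - π x| ∂μ ≤ √(∫ x in E, π x * (F x / π x - 1) ^ 2 ∂μ) := by
  have hGc : ContinuousOn (fun x => |F x / π x - 1|) E :=
    ((hFc.div hπc fun x hx => (hπ x hx).ne').sub continuousOn_const).abs
  have hweighted : ∫ x in E, |F x - π x| ∂μ = ∫ x in E, π x * |F x / π x - 1| ∂μ := by
    refine setIntegral_congr_fun hE.measurableSet fun x hx => ?_
    rw [← abs_of_pos (hπ x hx), ← abs_mul, abs_of_pos (hπ x hx), mul_sub,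
      mul_div_cancel₀ _ (hπ x hx).ne', mul_one]
  rw [hweighted]
  refine Real.le_sqrt_of_sq_le ?_
  simpa only [sq_abs] using sq_integral_mul_le_integral_mul_sq
    (ae_restrict_of_forall_mem hE.measurableSet fun x hx => (hπ x hx).le) hπ1
    (hπc.integrableOn_compact hE) ((hπc.mul hGc).integrableOn_compact hE)
    ((hπc.mul (hGc.pow 2)).integrableOn_compact hE)

theorem mul_sub_le_integral_metropolisKernel_mul_sub (hE : IsCompact E) {π : X → ℝ} {h : ℝ → ℝ}
    {Θ : X → X → ℝ} (hπc : ContinuousOn π E) (hπ : ∀ x ∈ E, 0 < π x)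
    (hhc : ContinuousOn h (Ici 0)) (hrange : ∀ u ∈ Ici (0 : ℝ), h u ∈ Icc (0 : ℝ) 1)
    (hΘc : ContinuousOn (uncurry Θ) (E ×ˢ E)) (hΘ : ∀ x ∈ E, ∀ y ∈ E, 0 < Θ x y)
    {G : X → ℝ} (hGc : ContinuousOn G E) {m : ℝ} (hm : ∀ y ∈ E, m ≤ G y) {x : X} (hx : x ∈ E)
    (hΘ1 : ∫ y in E, Θ x y ∂μ = 1) :
    π x * (m - G x) ≤ ∫ y in E, metropolisKernel π h Θ x y * (G y - G x) ∂μ := by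
  have hsection : ∀ {F : X → X → ℝ}, ContinuousOn (uncurry F) (E ×ˢ E) → ContinuousOn (F x) E :=
    fun hF => hF.comp (Continuous.prodMk_right x).continuousOn fun y hy => ⟨hx, hy⟩
  have hΘx : ContinuousOn (Θ x) E := hsection hΘc
  have hKx : ContinuousOn (metropolisKernel π h Θ x) E :=
    hsection (continuousOn_metropolisKernel hπc hπ hhc hΘc hΘ)
  calc π x * (m - G x) = ∫ y in E, π x * Θ x y * (m - G x) ∂μ := by
        rw [integral_mul_const, integral_const_mul, hΘ1, mul_one]
    _ ≤ _ := by
      refine setIntegral_mono_on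
        (((continuousOn_const.mul hΘx).mul continuousOn_const).integrableOn_compact hE)
        ((hKx.mul (hGc.sub continuousOn_const)).integrableOn_compact hE) hE.measurableSet
        fun y hy => mul_sub_le_mul_mul_sub (mul_pos (hπ x hx) (hΘ x hx y hy)).le
          (hrange _ ?_) (hm y hy) (hm x hx)
      exact (div_pos (mul_pos (hΘ y hy x hx) (hπ y hy)) (mul_pos (hΘ x hx y hy) (hπ x hx))).le

theorem sInf_image_div_le_of_metropolis (hE : IsCompact E) (hEne : E.Nonempty) {π : X → ℝ}
    {h : ℝ → ℝ} {Θ : ℝ → X → X → ℝ} {F : ℝ → X → ℝ} (hπc : ContinuousOn π E)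
    (hπ : ∀ x ∈ E, 0 < π x) (hhc : ContinuousOn h (Ici 0))
    (hrange : ∀ u ∈ Ici (0 : ℝ), h u ∈ Icc (0 : ℝ) 1)
    (hΘc : ∀ s ∈ Ici (0 : ℝ), ContinuousOn (uncurry (Θ s)) (E ×ˢ E))
    (hΘ : ∀ s ∈ Ici (0 : ℝ), ∀ x ∈ E, ∀ y ∈ E, 0 < Θ s x y)
    (hΘ1 : ∀ s ∈ Ici (0 : ℝ), ∀ x ∈ E, ∫ y in E, Θ s x y ∂μ = 1)
    (hFc : ContinuousOn (uncurry F) (Ici 0 ×ˢ E))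
    (hF : ∀ s ∈ Ici (0 : ℝ), ∀ x ∈ E, HasDerivWithinAt (F · x)
      (∫ y in E, metropolisKernel π h (Θ s) x y * (F s y / π y - F s x / π x) ∂μ) (Ici 0) s)
    {t : ℝ} (ht : 0 ≤ t) :
    sInf ((fun x => F 0 x / π x) '' E) ≤ sInf ((fun x => F t x / π x) '' E) := by
  set G : ℝ → X → ℝ := fun s x => F s x / π x
  have hGc : ContinuousOn (uncurry G) (Ici 0 ×ˢ E) :=
    hFc.div (hπc.comp continuous_snd.continuousOn fun p hp => hp.2) fun p hp => (hπ _ hp.2).ne'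
  have hGs : ∀ s ∈ Ici (0 : ℝ), ContinuousOn (G s) E := fun s hs =>
    hGc.comp (Continuous.prodMk_right s).continuousOn fun x hx => ⟨hs, hx⟩
  have hmin : ∀ s ∈ Ici (0 : ℝ), IsLeast (G s '' E) (sInf (G s '' E)) := fun s hs =>
    (hE.image_of_continuousOn (hGs s hs)).isLeast_sInf (hEne.image _)
  refine le_of_isLeast_of_hasDerivWithinAt (hE.continuousOn_sInf_image hGc) hmin
    (fun x hx s hs => (hF s hs x hx).div_const (π x)) (fun x hx s hs => ?_) ht
  rw [le_div_iff₀ (hπ x hx), mul_comm]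
  exact mul_sub_le_integral_metropolisKernel_mul_sub hE hπc hπ hhc hrange (hΘc s hs) (hΘ s hs)
    (hGs s hs) (fun y hy => (hmin s hs).2 (mem_image_of_mem _ hy)) hx (hΘ1 s hs x hx)

variable [SFinite μ] [SecondCountableTopology X]

theorem ContinuousOn.integrable_restrict_prod_restrict {F : X × X → ℝ}
    (hF : ContinuousOn F (E ×ˢ E)) (hE : IsCompact E) :
    Integrable F ((μ.restrict E).prod (μ.restrict E)) := by
  rw [Measure.prod_restrict]
  exact hF.integrableOn_compact (hE.prod hE)

/-- Swapping `x` and `y` turns the left side into the same integral with `G x - c` replaced by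
`-(G y - c)`; the average of the two is the right side. -/
theorem integral_mul_integral_mul_sub_eq_neg (hE : IsCompact E) {K : X → X → ℝ} {G : X → ℝ}
    (c : ℝ) (hKc : ContinuousOn (uncurry K) (E ×ˢ E))
    (hK : ∀ x ∈ E, ∀ y ∈ E, K x y = K y x) (hGc : ContinuousOn G E) :
    ∫ x in E, 2 * (G x - c) * ∫ y in E, K x y * (G y - G x) ∂μ ∂μ =
      -∫ z, K z.1 z.2 * (G z.2 - G z.1) ^ 2 ∂(μ.restrict E).prod (μ.restrict E) := by
  set P := (μ.restrict E).prod (μ.restrict E)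
  have hG₁ : ContinuousOn (fun z : X × X => G z.1) (E ×ˢ E) :=
    hGc.comp continuous_fst.continuousOn fun z hz => hz.1
  have hG₂ : ContinuousOn (fun z : X × X => G z.2) (E ×ˢ E) :=
    hGc.comp continuous_snd.continuousOn fun z hz => hz.2
  have hD : Integrable (fun z : X × X => 2 * (G z.1 - c) * (K z.1 z.2 * (G z.2 - G z.1))) P :=
    ((continuousOn_const.mul (hG₁.sub continuousOn_const)).mul
      (hKc.mul (hG₂.sub hG₁))).integrable_restrict_prod_restrict hE
  have hD' : Integrable (fun z : X × X => 2 * (G z.2 - c) * (K z.1 z.2 * (G z.1 - G z.2))) P :=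
    ((continuousOn_const.mul (hG₂.sub continuousOn_const)).mul
      (hKc.mul (hG₁.sub hG₂))).integrable_restrict_prod_restrict hE
  have hfubini : ∫ x in E, 2 * (G x - c) * ∫ y in E, K x y * (G y - G x) ∂μ ∂μ =
      ∫ z, 2 * (G z.1 - c) * (K z.1 z.2 * (G z.2 - G z.1)) ∂P := by
    simp_rw [← integral_const_mul]
    exact integral_integral hD
  have hswap : ∫ z, 2 * (G z.1 - c) * (K z.1 z.2 * (G z.2 - G z.1)) ∂P =
      ∫ z, 2 * (G z.2 - c) * (K z.1 z.2 * (G z.1 - G z.2)) ∂P := by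
    rw [← integral_prod_swap]
    refine integral_congr_ae ?_
    filter_upwards [ae_restrict_prod_restrict_mem hE] with z hz
    simp only [Prod.fst_swap, Prod.snd_swap, hK z.2 hz.2 z.1 hz.1]
  have hsum : ∫ z, 2 * (G z.1 - c) * (K z.1 z.2 * (G z.2 - G z.1)) ∂P +
      ∫ z, 2 * (G z.2 - c) * (K z.1 z.2 * (G z.1 - G z.2)) ∂P =
      -2 * ∫ z, K z.1 z.2 * (G z.2 - G z.1) ^ 2 ∂P := by
    rw [← integral_add hD hD', ← integral_const_mul]
    congr 1 with z
    ring
  linarith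

theorem integral_prod_mul_mul_sq_sub_eq (hE : IsCompact E) {π G : X → ℝ}
    (hπc : ContinuousOn π E) (hGc : ContinuousOn G E) (hπ1 : ∫ x in E, π x ∂μ = 1) {a : ℝ}
    (hπG : ∫ x in E, π x * G x ∂μ = a) :
    ∫ z, π z.1 * π z.2 * (G z.2 - G z.1) ^ 2 ∂(μ.restrict E).prod (μ.restrict E) =
      2 * ∫ x in E, π x * (G x - a) ^ 2 ∂μ := by
  have hπGc : ContinuousOn (fun x => π x * (G x - a)) E := hπc.mul (hGc.sub continuousOn_const)
  have hπG2c : ContinuousOn (fun x => π x * (G x - a) ^ 2) E :=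
    hπc.mul ((hGc.sub continuousOn_const).pow 2)
  have hcentered : ∫ x in E, π x * (G x - a) ∂μ = 0 := by
    have hπGi : IntegrableOn (fun x => π x * G x) E μ := (hπc.mul hGc).integrableOn_compact hE
    have hπai : IntegrableOn (fun x => π x * a) E μ := (hπc.integrableOn_compact hE).mul_const a
    simp_rw [mul_sub]
    rw [integral_sub hπGi hπai, integral_mul_const, hπG, hπ1]
    ring
  have hexpand : (fun z : X × X => π z.1 * π z.2 * (G z.2 - G z.1) ^ 2) =
      fun z => π z.1 * (π z.2 * (G z.2 - a) ^ 2) + π z.1 * (G z.1 - a) ^ 2 * π z.2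
        - 2 * (π z.1 * (G z.1 - a) * (π z.2 * (G z.2 - a))) := by
    ext z; ring
  have hint : ∀ {F₁ F₂ : X → ℝ}, ContinuousOn F₁ E → ContinuousOn F₂ E →
      Integrable (fun z : X × X => F₁ z.1 * F₂ z.2) ((μ.restrict E).prod (μ.restrict E)) :=
    fun h₁ h₂ => ((h₁.comp continuous_fst.continuousOn fun z hz => hz.1).mul
      (h₂.comp continuous_snd.continuousOn fun z hz => hz.2)).integrable_restrict_prod_restrict hE
  have hsq : Integrable (fun z : X × X => π z.1 * (π z.2 * (G z.2 - a) ^ 2)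
      + π z.1 * (G z.1 - a) ^ 2 * π z.2) ((μ.restrict E).prod (μ.restrict E)) :=
    (hint hπc hπG2c).add (hint hπG2c hπc)
  have hcross : Integrable (fun z : X × X => 2 * (π z.1 * (G z.1 - a) * (π z.2 * (G z.2 - a))))
      ((μ.restrict E).prod (μ.restrict E)) := (hint hπGc hπGc).const_mul _
  rw [hexpand, integral_sub hsq hcross, integral_add (hint hπc hπG2c) (hint hπG2c hπc),
    integral_const_mul, integral_prod_mul π (fun x => π x * (G x - a) ^ 2),
    integral_prod_mul (fun x => π x * (G x - a) ^ 2) π,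
    integral_prod_mul (fun x => π x * (G x - a)) (fun x => π x * (G x - a)), hπ1, hcentered]
  ring

theorem integral_mul_integral_metropolisKernel_le (hE : IsCompact E) {π : X → ℝ} {h : ℝ → ℝ}
    {Θ : X → X → ℝ} (hπc : ContinuousOn π E) (hπ : ∀ x ∈ E, 0 < π x)
    (hπ1 : ∫ x in E, π x ∂μ = 1) (hhc : ContinuousOn h (Ici 0)) (hmono : MonotoneOn h (Ici 0))
    (hsym : ∀ u : ℝ, 0 < u → u * h (1 / u) = h u) (hh1 : 0 ≤ h 1)
    (hΘc : ContinuousOn (uncurry Θ) (E ×ˢ E)) (hΘ : ∀ x ∈ E, ∀ y ∈ E, 0 < Θ x y) {c : ℝ}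
    (hc : ∀ x ∈ E, ∀ y ∈ E, c * π y ≤ Θ x y) {G : X → ℝ} (hGc : ContinuousOn G E)
    (hπG : ∫ x in E, π x * G x ∂μ = 1) :
    ∫ x in E, 2 * (G x - 1) * ∫ y in E, metropolisKernel π h Θ x y * (G y - G x) ∂μ ∂μ ≤
      -(2 * (c * h 1)) * ∫ x in E, π x * (G x - 1) ^ 2 ∂μ := by
  have hKc := continuousOn_metropolisKernel hπc hπ hhc hΘc hΘ
  have hΔc : ContinuousOn (fun z : X × X => (G z.2 - G z.1) ^ 2) (E ×ˢ E) :=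
    ((hGc.comp continuous_snd.continuousOn fun z hz => hz.2).sub
      (hGc.comp continuous_fst.continuousOn fun z hz => hz.1)).pow 2
  have hππc : ContinuousOn (fun z : X × X => π z.1 * π z.2) (E ×ˢ E) :=
    (hπc.comp continuous_fst.continuousOn fun z hz => hz.1).mul
      (hπc.comp continuous_snd.continuousOn fun z hz => hz.2)
  have hK_symm : ∀ x ∈ E, ∀ y ∈ E, metropolisKernel π h Θ x y = metropolisKernel π h Θ y x :=
    fun x hx y hy => metropolisKernel_comm hsym (mul_pos (hΘ x hx y hy) (hπ x hx))
      (mul_pos (hΘ y hy x hx) (hπ y hy))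
  have hK_ge : ∫ z, c * h 1 * (π z.1 * π z.2 * (G z.2 - G z.1) ^ 2)
        ∂(μ.restrict E).prod (μ.restrict E) ≤
      ∫ z, metropolisKernel π h Θ z.1 z.2 * (G z.2 - G z.1) ^ 2
        ∂(μ.restrict E).prod (μ.restrict E) := by
    refine integral_mono_ae ((hππc.mul hΔc).integrable_restrict_prod_restrict hE |>.const_mul _)
      ((hKc.mul hΔc).integrable_restrict_prod_restrict hE) ?_
    filter_upwards [ae_restrict_prod_restrict_mem hE] with z ⟨hx, hy⟩
    have := mul_le_metropolisKernel hsym hmono hh1 (hπ _ hx) (hπ _ hy) (hΘ _ hx _ hy)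
      (hΘ _ hy _ hx) (hc _ hx _ hy) (hc _ hy _ hx)
    nlinarith [mul_le_mul_of_nonneg_right this (sq_nonneg (G z.2 - G z.1))]
  rw [integral_mul_integral_mul_sub_eq_neg hE 1 hKc hK_symm hGc]
  rw [integral_const_mul, integral_prod_mul_mul_sq_sub_eq hE hπc hGc hπ1 hπG] at hK_ge
  linarith

theorem integral_mul_div_sub_one_sq_le_mul_exp (hE : IsCompact E) {π : X → ℝ} {h : ℝ → ℝ}
    {Θ : ℝ → X → X → ℝ} {F : ℝ → X → ℝ} (hπc : ContinuousOn π E) (hπ : ∀ x ∈ E, 0 < π x)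
    (hπ1 : ∫ x in E, π x ∂μ = 1) (hhc : ContinuousOn h (Ici 0)) (hmono : MonotoneOn h (Ici 0))
    (hsym : ∀ u : ℝ, 0 < u → u * h (1 / u) = h u) (hh1 : 0 ≤ h 1)
    (hΘc : ∀ s ∈ Ici (0 : ℝ), ContinuousOn (uncurry (Θ s)) (E ×ˢ E))
    (hΘ : ∀ s ∈ Ici (0 : ℝ), ∀ x ∈ E, ∀ y ∈ E, 0 < Θ s x y) {c : ℝ}
    (hc : ∀ s ∈ Ici (0 : ℝ), ∀ x ∈ E, ∀ y ∈ E, c * π y ≤ Θ s x y)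
    (hFc : ∀ s ∈ Ici (0 : ℝ), ContinuousOn (F s) E)
    (hF1 : ∀ s ∈ Ici (0 : ℝ), ∫ x in E, F s x ∂μ = 1)
    (hV : ∀ s ∈ Ici (0 : ℝ), HasDerivWithinAt (fun r => ∫ x in E, π x * (F r x / π x - 1) ^ 2 ∂μ)
      (∫ x in E, 2 * (F s x / π x - 1) *
        ∫ y in E, metropolisKernel π h (Θ s) x y * (F s y / π y - F s x / π x) ∂μ ∂μ) (Ici 0) s)
    {t : ℝ} (ht : 0 ≤ t) :
    ∫ x in E, π x * (F t x / π x - 1) ^ 2 ∂μ ≤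
      (∫ x in E, π x * (F 0 x / π x - 1) ^ 2 ∂μ) * Real.exp (-(2 * (c * h 1)) * t) := by
  refine (le_mul_exp_of_hasDerivWithinAt_le ht hV fun s hs => ?_).trans_eq (by rw [sub_zero])
  refine integral_mul_integral_metropolisKernel_le hE hπc hπ hπ1 hhc hmono hsym hh1 (hΘc s hs.1)
    (hΘ s hs.1) (hc s hs.1) ((hFc s hs.1).div hπc fun x hx => (hπ x hx).ne') ?_
  rw [← hF1 s hs.1]
  exact setIntegral_congr_fun hE.measurableSet fun x hx => mul_div_cancel₀ _ (hπ x hx).ne'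

end CompactDomain

theorem deriv_sub_one_sq : deriv (fun u : ℝ => (u - 1) ^ 2) = fun u => 2 * (u - 1) := by
  ext u
  simp

theorem convexOn_sub_one_sq : ConvexOn ℝ univ fun u : ℝ => (u - 1) ^ 2 := by
  simpa [Function.comp_def, sub_eq_neg_add] using even_two.convexOn_pow.translate_right (-1 : ℝ)

theorem sqrt_mul_exp_neg_two_mul (a r t : ℝ) :
    √(a * Real.exp (-(2 * r) * t)) = √a * Real.exp (-r * t) := by
  rw [Real.sqrt_mul' _ (Real.exp_pos _).le,
    show -(2 * r) * t = (2 : ℕ) * (-r * t) by push_cast; ring, Real.exp_nat_mul, Real.sqrt_sq (Real.exp_pos _).le]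

theorem mul_div_sub_one_sq {p a : ℝ} (hp : 0 < p) : p * (a / p - 1) ^ 2 = |a - p| ^ 2 / p := by
  rw [sq_abs]
  field_simp

theorem stmt_10_general {d : ℕ} (E : Set (EuclideanSpace ℝ (Fin d))) (hE : IsCompact E)
    (hEne : E.Nonempty)
    (π : EuclideanSpace ℝ (Fin d) → ℝ) (hπ : IsPosDensityOn E π)
    (h : ℝ → ℝ)
    (hcont : ContinuousOn h (Set.Ici 0))
    (hmono : MonotoneOn h (Set.Ici 0))
    (hrange : ∀ u ∈ Set.Ici (0 : ℝ), h u ∈ Set.Icc (0 : ℝ) 1)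
    (hsym : ∀ u : ℝ, 0 < u → u * h (1 / u) = h u)
    (hh1 : 0 < h 1)
    (Θ : (EuclideanSpace ℝ (Fin d) → ℝ) →
      EuclideanSpace ℝ (Fin d) → EuclideanSpace ℝ (Fin d) → ℝ)
    (hΘ : ∀ g, IsPosDensityOn E g →
      ContinuousOn (fun p : EuclideanSpace ℝ (Fin d) × EuclideanSpace ℝ (Fin d) =>
        Θ g p.1 p.2) (E ×ˢ E) ∧
      (∀ x ∈ E, ∀ y ∈ E, 0 < Θ g x y) ∧
      (∀ x ∈ E, (∫ y in E, Θ g x y) = 1))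
    (cminus : ℝ → ℝ)
    (hcm_mono : MonotoneOn cminus (Set.Ioi 0))
    (hcm_range : ∀ m : ℝ, 0 < m → cminus m ∈ Set.Ioc (0 : ℝ) 1)
    (hmonot : ∀ g, IsPosDensityOn E g → ∀ x ∈ E, ∀ y ∈ E,
      cminus (sInf ((fun z => g z / π z) '' E)) ≤ Θ g x y / π y)
    (f : ℝ → EuclideanSpace ℝ (Fin d) → ℝ)
    (hfc : ContinuousOn (fun p : ℝ × EuclideanSpace ℝ (Fin d) => f p.1 p.2)
      (Set.Ici 0 ×ˢ E))
    (hft : ∀ t ∈ Set.Ici (0 : ℝ), IsPosDensityOn E (f t))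
    (hderiv : ∀ t ∈ Set.Ici (0 : ℝ), ∀ x ∈ E,
      HasDerivWithinAt (fun s => f s x)
        (∫ y in E, π x * Θ (f t) x y *
          h (Θ (f t) y x * π y / (Θ (f t) x y * π x)) *
          (f t y / π y - f t x / π x)) (Set.Ici 0) t)
    (hentropy : ∀ φ : ℝ → ℝ, ConvexOn ℝ Set.univ φ → ContDiff ℝ 1 φ →
      ∀ t ∈ Set.Ici (0 : ℝ),
      HasDerivWithinAt (fun s => ∫ x in E, π x * φ (f s x / π x))
        (∫ x in E, deriv φ (f t x / π x) *
          (∫ y in E, π x * Θ (f t) x y *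
            h (Θ (f t) y x * π y / (Θ (f t) x y * π x)) *
            (f t y / π y - f t x / π x))) (Set.Ici 0) t) :
    0 < cminus (sInf ((fun x => f 0 x / π x) '' E)) * h 1 ∧
    ∀ t ∈ Set.Ici (0 : ℝ),
      ∫ x in E, |f t x - π x|
        ≤ Real.sqrt (∫ x in E, |f 0 x - π x| ^ 2 / π x) *
            Real.exp (-(cminus (sInf ((fun x => f 0 x / π x) '' E)) * h 1) * t) := by
  obtain ⟨hπc, hπ, hπ1⟩ := hπ
  have hΘf := fun s (hs : s ∈ Ici (0 : ℝ)) => hΘ (f s) (hft s hs)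
  set m₀ := sInf ((fun x => f 0 x / π x) '' E)
  have hm₀ : 0 < m₀ := hE.sInf_image_pos hEne ((hft 0 self_mem_Ici).1.div hπc
    fun x hx => (hπ x hx).ne') fun x hx => div_pos ((hft 0 self_mem_Ici).2.1 x hx) (hπ x hx)
  have hinf : ∀ s ∈ Ici (0 : ℝ), m₀ ≤ sInf ((fun x => f s x / π x) '' E) := fun s hs =>
    sInf_image_div_le_of_metropolis hE hEne hπc hπ hcont hrange (fun s hs => (hΘf s hs).1)
      (fun s hs => (hΘf s hs).2.1) (fun s hs => (hΘf s hs).2.2) hfc hderiv hs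
  have hc : ∀ s ∈ Ici (0 : ℝ), ∀ x ∈ E, ∀ y ∈ E, cminus m₀ * π y ≤ Θ (f s) x y :=
    fun s hs x hx y hy => (le_div_iff₀ (hπ y hy)).1 <|
      (hcm_mono hm₀ (hm₀.trans_le (hinf s hs)) (hinf s hs)).trans (hmonot _ (hft s hs) x hx y hy)
  have hV := fun s (hs : s ∈ Ici (0 : ℝ)) =>
    hentropy (fun u => (u - 1) ^ 2) convexOn_sub_one_sq (by fun_prop) s hs
  simp only [deriv_sub_one_sq] at hV
  refine ⟨mul_pos (hcm_range _ hm₀).1 hh1, fun t ht => ?_⟩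
  calc ∫ x in E, |f t x - π x| ≤ √(∫ x in E, π x * (f t x / π x - 1) ^ 2) :=
        integral_abs_sub_le_sqrt hE hπc hπ hπ1 (hft t ht).1
    _ ≤ √((∫ x in E, π x * (f 0 x / π x - 1) ^ 2) * Real.exp (-(2 * (cminus m₀ * h 1)) * t)) :=
        Real.sqrt_le_sqrt <| integral_mul_div_sub_one_sq_le_mul_exp hE hπc hπ hπ1 hcont hmono
          hsym hh1.le (fun s hs => (hΘf s hs).1) (fun s hs => (hΘf s hs).2.1) hc
          (fun s hs => (hft s hs).1) (fun s hs => (hft s hs).2.2) hV ht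
    _ = _ := by
      rw [sqrt_mul_exp_neg_two_mul, setIntegral_congr_fun hE.measurableSet
        fun x hx => mul_div_sub_one_sq (a := f 0 x) (hπ x hx)]

/-- Under the monotonicity assumption on the proposal distribution
and with `h(1) > 0`, any solution `f` of the nonlinear Metropolis evolution equation
with continuous positive probability density initial condition `f₀` satisfies, for
all `t ≥ 0`, `∫_E |f_t − π| ≤ C₀ exp(−λ t)` where
`λ := c⁻(inf_E f₀/π)·h(1) > 0` and `C₀ := sqrt(∫_E |f₀ − π|²/π)`.
Here `Θ g x y` denotes `Θ_g(y|x)`. -/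
theorem stmt_10 {d : ℕ} (E : Set (EuclideanSpace ℝ (Fin d))) (hE : IsCompact E)
    (hEne : E.Nonempty)
    (π : EuclideanSpace ℝ (Fin d) → ℝ) (hπ : IsPosDensityOn E π)
    (h : ℝ → ℝ)
    (hcont : ContinuousOn h (Set.Ici 0))
    (hmono : MonotoneOn h (Set.Ici 0))
    (hrange : ∀ u ∈ Set.Ici (0 : ℝ), h u ∈ Set.Icc (0 : ℝ) 1)
    (hlip : ∃ L : NNReal, LipschitzOnWith L h (Set.Ici 0))
    (hsym : ∀ u : ℝ, 0 < u → u * h (1 / u) = h u)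
    (hh1 : 0 < h 1)
    (Θ : (EuclideanSpace ℝ (Fin d) → ℝ) →
      EuclideanSpace ℝ (Fin d) → EuclideanSpace ℝ (Fin d) → ℝ)
    (hΘ : ∀ g, IsPosDensityOn E g →
      ContinuousOn (fun p : EuclideanSpace ℝ (Fin d) × EuclideanSpace ℝ (Fin d) =>
        Θ g p.1 p.2) (E ×ˢ E) ∧
      (∀ x ∈ E, ∀ y ∈ E, 0 < Θ g x y) ∧
      (∀ x ∈ E, (∫ y in E, Θ g x y) = 1))
    (cminus : ℝ → ℝ)
    (hcm_mono : MonotoneOn cminus (Set.Ioi 0))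
    (hcm_range : ∀ m : ℝ, 0 < m → cminus m ∈ Set.Ioc (0 : ℝ) 1)
    (hmonot : ∀ g, IsPosDensityOn E g → ∀ x ∈ E, ∀ y ∈ E,
      cminus (sInf ((fun z => g z / π z) '' E)) ≤ Θ g x y / π y)
    (f : ℝ → EuclideanSpace ℝ (Fin d) → ℝ)
    (hfc : ContinuousOn (fun p : ℝ × EuclideanSpace ℝ (Fin d) => f p.1 p.2)
      (Set.Ici 0 ×ˢ E))
    (hft : ∀ t ∈ Set.Ici (0 : ℝ), IsPosDensityOn E (f t))
    (hderiv : ∀ t ∈ Set.Ici (0 : ℝ), ∀ x ∈ E,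
      HasDerivWithinAt (fun s => f s x)
        (∫ y in E, π x * Θ (f t) x y *
          h (Θ (f t) y x * π y / (Θ (f t) x y * π x)) *
          (f t y / π y - f t x / π x)) (Set.Ici 0) t)
    (hentropy : ∀ φ : ℝ → ℝ, ConvexOn ℝ Set.univ φ → ContDiff ℝ 1 φ →
      ∀ t ∈ Set.Ici (0 : ℝ),
      HasDerivWithinAt (fun s => ∫ x in E, π x * φ (f s x / π x))
        (∫ x in E, deriv φ (f t x / π x) *
          (∫ y in E, π x * Θ (f t) x y *
            h (Θ (f t) y x * π y / (Θ (f t) x y * π x)) *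
            (f t y / π y - f t x / π x))) (Set.Ici 0) t) :
    0 < cminus (sInf ((fun x => f 0 x / π x) '' E)) * h 1 ∧
    ∀ t ∈ Set.Ici (0 : ℝ),
      ∫ x in E, |f t x - π x|
        ≤ Real.sqrt (∫ x in E, |f 0 x - π x| ^ 2 / π x) *
            Real.exp (-(cminus (sInf ((fun x => f 0 x / π x) '' E)) * h 1) * t) :=
  stmt_10_general E hE hEne π hπ h hcont hmono hrange hsym hh1 Θ hΘ cminus hcm_mono hcm_range hmonot
    f hfc hft hderiv hentropy
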